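/- arXiv:1607.06069 — 3 statements merged into one kernel-verified Lean document; each statement's English description precedes it below -/
import Mathlib

section
/- Define ℐ_s(t) as the one-dimensional dyadic block kernel 2^{2−s} sin²(π2^{s−2}t)(2cos(π2^{s−1}t)+1)(cos(π2^{s−1}t)+cos(π2^s t)−1)/(π²t²). Then for every 1 ≤ p < ∞ there exist constants C₁, C₂ > 0 depending only on p such that for all s ≥ 1, C₁·2^{s(1−1/p)} ≤ (∫_ℝ |ℐ_s(t)|^p dt)^{1/p} ≤ C₂·2^{s(1−1/p)}. -/
/-!
With `a = 2^(s-2)` the frequencies `2^(s-1)` and `2^s` are `2a` and `4a`, so away from `t = 0`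
the kernel is an exact dilate: `ℐ_s(t) = a · ℐ(a t)` for a single profile `ℐ`. Substituting
`u = a t` gives `‖ℐ_s‖_p^p = a^(p-1) ‖ℐ‖_p^p`, hence `‖ℐ_s‖_p = c_p · 2^(s(1-1/p))` with
`c_p = 2^(-2(1-1/p)) ‖ℐ‖_p`. This constant is finite because `|ℐ(u)| ≲ (1 + |u|)^(-2)`, and
positive because `ℐ(1/4) = -16/π² ≠ 0` and `ℐ` is continuous there.
-/

/-- The one-dimensional dyadic block kernel `ℐ_s = K_s - K_{s-1}`, given by its explicit
formula for `t ≠ 0` and extended continuously (by its limit value `3·2^{s-2}`) at `t = 0`. -/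
noncomputable def blockKernel (s : ℕ) (t : ℝ) : ℝ :=
  if t = 0 then 3 * 2 ^ ((s : ℝ) - 2)
  else
    (2 : ℝ) ^ ((2 : ℝ) - (s : ℝ)) *
      (Real.sin (Real.pi * 2 ^ ((s : ℝ) - 2) * t)) ^ 2 *
      (2 * Real.cos (Real.pi * 2 ^ ((s : ℝ) - 1) * t) + 1) *
      (Real.cos (Real.pi * 2 ^ ((s : ℝ) - 1) * t) +
        Real.cos (Real.pi * 2 ^ (s : ℝ) * t) - 1) /
      (Real.pi ^ 2 * t ^ 2)

open Real MeasureTheory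

-- At `u = 0` this takes the junk value `0`; only its a.e. class matters below.
noncomputable def blockProfile (u : ℝ) : ℝ :=
  sin (π * u) ^ 2 * (2 * cos (2 * π * u) + 1) * (cos (2 * π * u) + cos (4 * π * u) - 1) /
    (π ^ 2 * u ^ 2)

lemma blockKernel_of_ne_zero (s : ℕ) {t : ℝ} (ht : t ≠ 0) :
    blockKernel s t = 2 ^ ((s : ℝ) - 2) * blockProfile (2 ^ ((s : ℝ) - 2) * t) := by
  have h₁ : (2 : ℝ) ^ ((s : ℝ) - 1) = 2 * 2 ^ ((s : ℝ) - 2) := by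
    rw [show (s : ℝ) - 1 = (s - 2) + 1 by ring, rpow_add_one two_ne_zero, mul_comm]
  have h₀ : (2 : ℝ) ^ (s : ℝ) = 4 * 2 ^ ((s : ℝ) - 2) := by
    rw [show (s : ℝ) = (s - 2) + 2 by ring, rpow_add two_pos, rpow_two]; ring_nf
  have hinv : (2 : ℝ) ^ ((2 : ℝ) - s) = (2 ^ ((s : ℝ) - 2))⁻¹ := by
    rw [← rpow_neg two_pos.le, neg_sub]
  have ha : (0 : ℝ) < 2 ^ ((s : ℝ) - 2) := by positivity
  rw [blockKernel, if_neg ht, h₁, h₀, hinv, blockProfile]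
  generalize (2 : ℝ) ^ ((s : ℝ) - 2) = a at ha ⊢
  field_simp

lemma blockKernel_ae_eq (s : ℕ) :
    blockKernel s =ᵐ[volume]
      fun t ↦ 2 ^ ((s : ℝ) - 2) * blockProfile (2 ^ ((s : ℝ) - 2) * t) := by
  filter_upwards [volume.ae_ne 0] with t ht using blockKernel_of_ne_zero s ht

lemma measurable_blockProfile : Measurable blockProfile := by
  unfold blockProfile; fun_prop

lemma blockProfile_quarter : blockProfile (1 / 4) = -16 / π ^ 2 := by
  have h₁ : π * (1 / 4) = π / 4 := by ring
  have h₂ : 2 * π * (1 / 4) = π / 2 := by ring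
  have h₃ : 4 * π * (1 / 4) = π := by ring
  rw [blockProfile, h₁, h₂, h₃, cos_pi_div_two, cos_pi, sin_pi_div_four, div_pow,
    sq_sqrt zero_le_two]
  field_simp
  norm_num

lemma abs_blockProfile_le (u : ℝ) : |blockProfile u| ≤ 36 / (1 + |u|) ^ 2 := by
  rcases eq_or_ne u 0 with rfl | hu
  · simp [blockProfile]
  set S := sin (π * u) ^ 2
  have hS₁ : S ≤ 1 := sin_sq_le_one _
  have hS₂ : S ≤ π ^ 2 * u ^ 2 := (sin_sq_le_sq).trans_eq (mul_pow _ _ _)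
  have hA : |2 * cos (2 * π * u) + 1| ≤ 3 := by
    have := abs_cos_le_one (2 * π * u)
    calc _ ≤ 2 * |cos (2 * π * u)| + 1 := by
          grw [abs_add_le, abs_mul, abs_two, abs_one]
      _ ≤ 3 := by linarith
  have hB : |cos (2 * π * u) + cos (4 * π * u) - 1| ≤ 3 := by
    have := abs_cos_le_one (2 * π * u)
    have := abs_cos_le_one (4 * π * u)
    grw [abs_sub _ _, abs_add_le, abs_one]; linarith
  have hnum : |S * (2 * cos (2 * π * u) + 1) * (cos (2 * π * u) + cos (4 * π * u) - 1)|
      ≤ 9 * S := by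
    rw [abs_mul, abs_mul, abs_of_nonneg (sq_nonneg _)]
    calc _ ≤ S * 3 * 3 := by gcongr
      _ = 9 * S := by ring
  have hden : 0 < π ^ 2 * u ^ 2 := by positivity
  have hπ : 1 ≤ π ^ 2 := by nlinarith [pi_gt_three]
  have habs : (1 + |u|) ^ 2 ≤ 2 + 2 * u ^ 2 := by nlinarith [sq_abs u, sq_nonneg (1 - |u|)]
  rw [blockProfile, abs_div, abs_of_pos hden, div_le_div_iff₀ hden (by positivity)]
  calc _ ≤ 9 * S * (1 + |u|) ^ 2 := by gcongr
    _ ≤ 9 * S * (2 + 2 * u ^ 2) := by gcongr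
    _ ≤ 36 * (π ^ 2 * u ^ 2) := by nlinarith [mul_le_mul_of_nonneg_right hS₁ (sq_nonneg u)]

lemma abs_blockProfile_rpow_le {p : ℝ} (hp : 0 ≤ p) (u : ℝ) :
    |blockProfile u| ^ p ≤ 36 ^ p * (1 + ‖u‖) ^ (-(2 * p)) := by
  have h : 0 < 1 + |u| := by positivity
  calc |blockProfile u| ^ p ≤ (36 / (1 + |u|) ^ 2) ^ p := by
        gcongr; exact abs_blockProfile_le u
    _ = 36 ^ p * (1 + ‖u‖) ^ (-(2 * p)) := by
        rw [div_rpow (by norm_num) (by positivity), ← rpow_natCast, ← rpow_mul h.le,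
          Real.norm_eq_abs, rpow_neg h.le, Nat.cast_ofNat, div_eq_mul_inv]

lemma integrable_abs_blockProfile_rpow {p : ℝ} (hp : 1 / 2 < p) :
    Integrable fun u ↦ |blockProfile u| ^ p := by
  refine ((integrable_one_add_norm (E := ℝ) (μ := volume) (r := 2 * p) ?_).const_mul
    (36 ^ p)).mono' ?_ (Filter.Eventually.of_forall fun u ↦ ?_)
  · simp only [Module.finrank_self, Nat.cast_one]; linarith
  · exact (measurable_blockProfile.abs.pow_const p).aestronglyMeasurable
  · rw [Real.norm_of_nonneg (by positivity)]
    exact abs_blockProfile_rpow_le (by linarith) u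

lemma continuousAt_blockProfile {u : ℝ} (hu : u ≠ 0) : ContinuousAt blockProfile u := by
  unfold blockProfile
  exact ContinuousAt.div (by fun_prop) (by fun_prop) (by positivity)

lemma integral_abs_blockProfile_rpow_pos {p : ℝ} (hp : 1 / 2 < p) :
    0 < ∫ u, |blockProfile u| ^ p := by
  have hnonneg : 0 ≤ fun u ↦ |blockProfile u| ^ p := fun u ↦ by positivity
  rw [integral_pos_iff_support_of_nonneg hnonneg (integrable_abs_blockProfile_rpow hp)]
  have hquarter : 0 < |blockProfile (1 / 4)| ^ p := by
    rw [blockProfile_quarter]; positivity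
  have hcont : ContinuousAt (fun u ↦ |blockProfile u| ^ p) (1 / 4) :=
    (continuousAt_blockProfile (by norm_num)).abs.rpow_const (Or.inr (by linarith))
  obtain ⟨U, hU, hUo, hqU⟩ := eventually_nhds_iff.1 (hcont.eventually (lt_mem_nhds hquarter))
  exact (hUo.measure_pos volume ⟨_, hqU⟩).trans_le
    (measure_mono fun u hu ↦ (hU u hu).ne')

lemma integral_abs_blockKernel_rpow (s : ℕ) (p : ℝ) :
    ∫ t, |blockKernel s t| ^ p = 2 ^ (((s : ℝ) - 2) * (p - 1)) * ∫ u, |blockProfile u| ^ p := by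
  have ha : (0 : ℝ) < 2 ^ ((s : ℝ) - 2) := by positivity
  calc ∫ t, |blockKernel s t| ^ p
      = ∫ t, (2 : ℝ) ^ (((s : ℝ) - 2) * p) * |blockProfile (2 ^ ((s : ℝ) - 2) * t)| ^ p := by
        refine integral_congr_ae ((blockKernel_ae_eq s).mono fun t ht ↦ ?_)
        dsimp only
        rw [ht, abs_mul, abs_of_pos ha, mul_rpow ha.le (abs_nonneg _), ← rpow_mul two_pos.le]
    _ = 2 ^ (((s : ℝ) - 2) * p) * (2 ^ ((s : ℝ) - 2))⁻¹ * ∫ u, |blockProfile u| ^ p := by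
        rw [integral_const_mul, Measure.integral_comp_mul_left (fun u ↦ |blockProfile u| ^ p),
          abs_of_pos (inv_pos.2 ha), smul_eq_mul, mul_assoc]
    _ = 2 ^ (((s : ℝ) - 2) * (p - 1)) * ∫ u, |blockProfile u| ^ p := by
        rw [← rpow_neg two_pos.le, ← rpow_add two_pos]; ring_nf

theorem stmt_7 (p : ℝ) (hp : 1 ≤ p) :
    ∃ C₁ C₂ : ℝ, 0 < C₁ ∧ 0 < C₂ ∧ ∀ s : ℕ, 1 ≤ s →
      C₁ * (2 : ℝ) ^ ((s : ℝ) * (1 - 1 / p)) ≤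
        (∫ t : ℝ, |blockKernel s t| ^ p) ^ (1 / p) ∧
      (∫ t : ℝ, |blockKernel s t| ^ p) ^ (1 / p) ≤
        C₂ * (2 : ℝ) ^ ((s : ℝ) * (1 - 1 / p)) := by
  set I := ∫ u, |blockProfile u| ^ p
  have hI : 0 < I := integral_abs_blockProfile_rpow_pos (by linarith)
  set C := (2 : ℝ) ^ (-2 * (1 - 1 / p)) * I ^ (1 / p)
  have hnorm (s : ℕ) :
      (∫ t, |blockKernel s t| ^ p) ^ (1 / p) = C * 2 ^ ((s : ℝ) * (1 - 1 / p)) := by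
    have hexp : ((s : ℝ) - 2) * (p - 1) * (1 / p) = -2 * (1 - 1 / p) + s * (1 - 1 / p) := by
      field_simp; ring
    rw [integral_abs_blockKernel_rpow, mul_rpow (by positivity) hI.le, ← rpow_mul two_pos.le,
      hexp, rpow_add two_pos]
    ring
  exact ⟨C, C, by positivity, by positivity, fun s _ ↦ ⟨(hnorm s).ge, (hnorm s).le⟩⟩
end

section
/- Let d ≥ 1, r₁ > 1, 1 ≤ θ < ∞, and suppose for each s ∈ ℤ₊^d a nonnegative real a_s is given with (Σ_{s≥0} 2^{(s,r)θ} a_s^θ)^{1/θ} ≤ 1, where r = (r₁,…,r_d) with r₁ = ⋯ = r_ν < r_{ν+1} ≤ ⋯ ≤ r_d and γ_j = r_j/r₁. Then Σ_{(s,γ)>n} 2^{‖s‖₁} a_s ≤ C·2^{−n(r₁−1)}·n^{(ν−1)(1−1/θ)} for a constant C independent of n and of the sequence (a_s). -/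
/-!
Write `2 ^ ‖s‖₁ * a s = (2 ^ (s, r) * a s) * 2 ^ (-(s, r - 1))`. Since
`(r₁ - 1) (s, γ) ≤ (s, r - 1)`, the second factor is at most `2 ^ (-n (r₁ - 1))` where
`(s, γ) > n`, which settles `θ = 1`. For `θ > 1`, Hölder's inequality with the conjugate exponent
`β` reduces the claim to the hyperbolic cross estimate
`∑_{(s, γ) > n} 2 ^ (-β (s, r - 1)) ≲ n ^ (ν - 1) 2 ^ (-β n (r₁ - 1))`.
For it, split `s = (u, v)` into the first `ν` coordinates, where `γ j = 1`, and the others. For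
fixed `v` the `u`-sum is a tail `∑_{‖u‖₁ > y} 2 ^ (-c ‖u‖₁)`, with `c = β (r₁ - 1)` and
`y = n - (v, γ)`, and such a tail is `≲ (y + 1) ^ (ν - 1) 2 ^ (-c y)` because at most
`(k + 1) ^ (ν - 1)` vectors `u` have `‖u‖₁ = k`. What is left of the weight of `v` is
`2 ^ (-β (v, r - 1 - (r₁ - 1) γ))`, which is summable because `r j > r₁` for `j ≥ ν`.
-/

open Finset Real
open scoped ENNReal

section HyperbolicCross

variable {κ ι : Type*} [Fintype κ] [Fintype ι]

lemma encard_setOf_sum_eq_le (k : ℕ) :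
    {u : κ → ℕ | ∑ i, u i = k}.encard ≤ ((k + 1) ^ (Fintype.card κ - 1) : ℕ) := by
  classical
  rcases isEmpty_or_nonempty κ with hκ | ⟨⟨i₀⟩⟩
  · simpa using Set.encard_le_one_iff.2 fun u v _ _ => Subsingleton.elim u v
  have hle : ∀ u : κ → ℕ, ∑ i, u i = k → ∀ i, u i ≤ k := fun u hu i =>
    hu ▸ single_le_sum (fun j _ => Nat.zero_le (u j)) (mem_univ i)
  -- a vector with `‖u‖₁ = k` is determined by its coordinates other than `i₀`
  have hinj : Set.InjOn (fun u : κ → ℕ => fun i : {i // i ≠ i₀} => Fin.ofNat (k + 1) (u i))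
      {u | ∑ i, u i = k} := by
    intro u hu v hv huv
    have hne : ∀ i, i ≠ i₀ → u i = v i := fun i hi => by
      have := congrArg Fin.val (congrFun huv ⟨i, hi⟩)
      simpa [Fin.val_ofNat, Nat.mod_eq_of_lt (Nat.lt_succ_of_le (hle u hu i)),
        Nat.mod_eq_of_lt (Nat.lt_succ_of_le (hle v hv i))] using this
    have hrest : ∑ i ∈ {i₀}ᶜ, u i = ∑ i ∈ {i₀}ᶜ, v i :=
      sum_congr rfl fun i hi => hne i (by simpa using hi)
    have hsum : u i₀ + ∑ i ∈ {i₀}ᶜ, u i = v i₀ + ∑ i ∈ {i₀}ᶜ, v i := by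
      rw [← Fintype.sum_eq_add_sum_compl, ← Fintype.sum_eq_add_sum_compl, hu, hv]
    funext i
    by_cases hi : i = i₀
    · subst hi; omega
    · exact hne i hi
  calc {u : κ → ℕ | ∑ i, u i = k}.encard
      ≤ (Set.univ : Set ({i // i ≠ i₀} → Fin (k + 1))).encard :=
        Set.encard_le_encard_of_injOn (Set.mapsTo_univ _ _) hinj
    _ = ((k + 1) ^ (Fintype.card κ - 1) : ℕ) := by
        simp [Set.encard_univ, ENat.card_eq_coe_fintype_card]

lemma summable_add_one_pow_mul_two_rpow (p : ℕ) {c : ℝ} (hc : 0 < c) :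
    Summable fun t : ℕ => ((t : ℝ) + 1) ^ p * (2 : ℝ) ^ (-c * t) := by
  have hρ : ‖(2 : ℝ) ^ (-c)‖ < 1 := by
    rw [Real.norm_of_nonneg (by positivity)]
    exact rpow_lt_one_of_one_lt_of_neg one_lt_two (by linarith)
  have h := (summable_nat_add_iff (f := fun t : ℕ => (t : ℝ) ^ p * ((2 : ℝ) ^ (-c)) ^ t) 1).2
    (summable_pow_mul_geometric_of_norm_lt_one p hρ)
  refine (h.mul_left ((2 : ℝ) ^ c)).congr fun t => ?_
  have hpow : ((2 : ℝ) ^ (-c)) ^ (t + 1) = 2 ^ (-c * t) * 2 ^ (-c) := by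
    rw [← rpow_natCast, ← rpow_mul zero_le_two, ← rpow_add two_pos]
    push_cast
    ring_nf
  have hinv : (2 : ℝ) ^ c * 2 ^ (-c) = 1 := by rw [← rpow_add two_pos]; simp
  simp only [hpow, Nat.cast_add, Nat.cast_one]
  linear_combination ((t : ℝ) + 1) ^ p * 2 ^ (-c * t) * hinv

lemma add_one_pow_mul_two_rpow_le_of_le {p : ℕ} {c : ℝ} (hc : 0 < c) {y : ℝ} {k m : ℕ}
    (hm : (m : ℝ) + 1 ≤ 2 * (max y 0 + 1)) (hmk : m ≤ k) (hym : y ≤ m) :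
    ((k : ℝ) + 1) ^ p * 2 ^ (-c * k) ≤
      2 ^ p * (max y 0 + 1) ^ p * 2 ^ (-c * y) *
        ((((k - m : ℕ) : ℝ) + 1) ^ p * 2 ^ (-c * (k - m : ℕ))) := by
  rw [Nat.cast_sub hmk]
  have hk : (m : ℝ) ≤ k := by exact_mod_cast hmk
  have hpoly : ((k : ℝ) + 1) ^ p ≤ 2 ^ p * (max y 0 + 1) ^ p * ((k - m : ℝ) + 1) ^ p := by
    rw [← mul_pow, ← mul_pow]
    gcongr
    nlinarith
  have hexp : (2 : ℝ) ^ (-c * k) ≤ 2 ^ (-c * y) * 2 ^ (-c * (k - m : ℝ)) := by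
    rw [← rpow_add two_pos]
    gcongr
    · norm_num
    · nlinarith
  calc ((k : ℝ) + 1) ^ p * 2 ^ (-c * k)
      ≤ (2 ^ p * (max y 0 + 1) ^ p * ((k - m : ℝ) + 1) ^ p) *
          (2 ^ (-c * y) * 2 ^ (-c * (k - m : ℝ))) := by gcongr
    _ = _ := by ring

lemma exists_tsum_tail_pow_mul_two_rpow_le (p : ℕ) {c : ℝ} (hc : 0 < c) :
    ∃ C : ℝ, 0 ≤ C ∧ ∀ y : ℝ,
      ∑' k : ℕ, {k : ℕ | y < k}.indicator
          (fun k => ENNReal.ofReal (((k : ℝ) + 1) ^ p * 2 ^ (-c * k))) k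
        ≤ ENNReal.ofReal (C * (max y 0 + 1) ^ p * 2 ^ (-c * y)) := by
  set g : ℕ → ℝ := fun t => ((t : ℝ) + 1) ^ p * 2 ^ (-c * t)
  have hg : Summable g := summable_add_one_pow_mul_two_rpow p hc
  refine ⟨2 ^ p * ∑' t, g t, mul_nonneg (by positivity) (tsum_nonneg fun t => by positivity),
    fun y => ?_⟩
  set m := ⌈y⌉₊
  set X := 2 ^ p * (max y 0 + 1) ^ p * (2 : ℝ) ^ (-c * y)
  have hm : (m : ℝ) + 1 ≤ 2 * (max y 0 + 1) := by
    rcases le_or_gt y 0 with hy | hy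
    · simp [m, Nat.ceil_eq_zero.2 hy, hy]
    · linarith [Nat.ceil_lt_add_one hy.le, le_max_left y 0]
  -- the terms with `k > y` are those with `k = m + t`, and each is at most `X * g t`
  have hinj : Function.Injective fun k : {k : ℕ // y < k} => (k : ℕ) - m := fun k l hkl => by
    have := Nat.ceil_le.2 k.2.le
    have := Nat.ceil_le.2 l.2.le
    exact Subtype.ext (by simp only at hkl; omega)
  calc ∑' k : ℕ, {k : ℕ | y < k}.indicator (fun k => ENNReal.ofReal (g k)) k
      = ∑' k : {k : ℕ // y < k}, ENNReal.ofReal (g k) := (tsum_subtype {k : ℕ | y < k} _).symm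
    _ ≤ ∑' k : {k : ℕ // y < k}, ENNReal.ofReal (X * g ((k : ℕ) - m)) :=
        ENNReal.tsum_le_tsum fun k => ENNReal.ofReal_le_ofReal <|
          add_one_pow_mul_two_rpow_le_of_le hc hm (Nat.ceil_le.2 k.2.le) (Nat.le_ceil y)
    _ ≤ ∑' t : ℕ, ENNReal.ofReal (X * g t) :=
        ENNReal.tsum_comp_le_tsum_of_injective hinj fun t => ENNReal.ofReal (X * g t)
    _ = ENNReal.ofReal (2 ^ p * (∑' t, g t) * (max y 0 + 1) ^ p * 2 ^ (-c * y)) := by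
        rw [← ENNReal.ofReal_tsum_of_nonneg (fun t => by positivity) (hg.mul_left X),
          tsum_mul_left]
        simp only [X]
        ring_nf

lemma exists_tsum_tail_two_rpow_sum_le {c : ℝ} (hc : 0 < c) :
    ∃ C : ℝ, 0 ≤ C ∧ ∀ y : ℝ,
      ∑' u : κ → ℕ, {u : κ → ℕ | y < ∑ i, (u i : ℝ)}.indicator
          (fun u => ENNReal.ofReal (2 ^ (-c * ∑ i, (u i : ℝ)))) u
        ≤ ENNReal.ofReal (C * (max y 0 + 1) ^ (Fintype.card κ - 1) * 2 ^ (-c * y)) := by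
  obtain ⟨C, hC0, hC⟩ := exists_tsum_tail_pow_mul_two_rpow_le (Fintype.card κ - 1) hc
  refine ⟨C, hC0, fun y => le_trans ?_ (hC y)⟩
  set G : ℕ → ℝ≥0∞ := {k : ℕ | y < k}.indicator fun k => ENNReal.ofReal (2 ^ (-c * k))
  rw [← ENNReal.tsum_fiberwise _ fun u : κ → ℕ => ∑ i, u i]
  refine ENNReal.tsum_le_tsum fun k => ?_
  calc ∑' u : (fun u : κ → ℕ => ∑ i, u i) ⁻¹' {k},
        {u : κ → ℕ | y < ∑ i, (u i : ℝ)}.indicator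
          (fun u => ENNReal.ofReal (2 ^ (-c * ∑ i, (u i : ℝ)))) u
      = ∑' _ : (fun u : κ → ℕ => ∑ i, u i) ⁻¹' {k}, G k := by
        refine tsum_congr fun ⟨u, hu⟩ => ?_
        have hu : ∑ i, (u i : ℝ) = k := by exact_mod_cast hu
        simp only [G, Set.indicator_apply, Set.mem_ofPred_eq, hu]
    _ ≤ ((k + 1) ^ (Fintype.card κ - 1) : ℕ) * G k := by
        rw [ENNReal.tsum_const]
        gcongr
        exact_mod_cast encard_setOf_sum_eq_le k
    _ = _ := by
        simp only [G, Set.indicator_apply, Set.mem_ofPred_eq]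
        split_ifs
        · rw [← ENNReal.ofReal_natCast, ← ENNReal.ofReal_mul (by positivity)]
          push_cast
          rfl
        · simp

lemma tsum_two_rpow_neg_sum_mul_ne_top {w : ι → ℝ} (hw : ∀ j, 0 < w j) :
    ∑' v : ι → ℕ, ENNReal.ofReal (2 ^ (-∑ j, (v j : ℝ) * w j)) ≠ ⊤ := by
  obtain ⟨δ, hδ, hδw⟩ : ∃ δ > 0, ∀ j, δ ≤ w j := by
    rcases isEmpty_or_nonempty ι with hι | hι
    · exact ⟨1, one_pos, fun j => isEmptyElim j⟩
    · obtain ⟨j₀, hj₀⟩ := Finite.exists_min w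
      exact ⟨w j₀, hw j₀, hj₀⟩
  obtain ⟨C, -, hC⟩ := exists_tsum_tail_two_rpow_sum_le (κ := ι) hδ
  refine ne_top_of_le_ne_top ENNReal.ofReal_ne_top
    ((ENNReal.tsum_le_tsum fun v => ?_).trans (hC (-1)))
  have hv : 0 ≤ ∑ j, (v j : ℝ) := by positivity
  rw [Set.indicator_apply, if_pos (by change (-1 : ℝ) < _; linarith)]
  refine ENNReal.ofReal_le_ofReal (rpow_le_rpow_of_exponent_le one_le_two ?_)
  rw [neg_mul, neg_le_neg_iff, mul_sum]
  exact sum_le_sum fun j _ => by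
    rw [mul_comm]
    exact mul_le_mul_of_nonneg_left (hδw j) (by positivity)

lemma exists_tsum_tail_add_le {c : ℝ} (hc : 0 < c) :
    ∃ C : ℝ, 0 ≤ C ∧ ∀ t z e : ℝ, 0 ≤ t → 0 ≤ z →
      ∑' u : κ → ℕ, {u : κ → ℕ | t < ∑ i, (u i : ℝ) + z}.indicator
          (fun u => ENNReal.ofReal (2 ^ (-(c * ∑ i, (u i : ℝ) + e)))) u
        ≤ ENNReal.ofReal
            (C * (t + 1) ^ (Fintype.card κ - 1) * 2 ^ (-c * t) * 2 ^ (c * z - e)) := by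
  obtain ⟨C, hC0, hC⟩ := exists_tsum_tail_two_rpow_sum_le (κ := κ) hc
  refine ⟨C, hC0, fun t z e ht hz => ?_⟩
  have hsplit : ∀ u : κ → ℕ,
      {u : κ → ℕ | t < ∑ i, (u i : ℝ) + z}.indicator
          (fun u => ENNReal.ofReal (2 ^ (-(c * ∑ i, (u i : ℝ) + e)))) u
        = {u : κ → ℕ | t - z < ∑ i, (u i : ℝ)}.indicator
            (fun u => ENNReal.ofReal (2 ^ (-c * ∑ i, (u i : ℝ)))) u *
          ENNReal.ofReal (2 ^ (-e)) := by
    intro u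
    simp only [Set.indicator_apply, Set.mem_ofPred_eq]
    by_cases h : t < ∑ i, (u i : ℝ) + z
    · rw [if_pos h, if_pos (by linarith), ← ENNReal.ofReal_mul (by positivity),
        ← rpow_add two_pos]
      ring_nf
    · rw [if_neg h, if_neg (by linarith), zero_mul]
  have hexp : (2 : ℝ) ^ (-c * (t - z)) * 2 ^ (-e) = 2 ^ (-c * t) * 2 ^ (c * z - e) := by
    rw [← rpow_add two_pos, ← rpow_add two_pos]
    ring_nf
  calc _ = (∑' u : κ → ℕ, {u : κ → ℕ | t - z < ∑ i, (u i : ℝ)}.indicator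
            (fun u => ENNReal.ofReal (2 ^ (-c * ∑ i, (u i : ℝ)))) u) *
          ENNReal.ofReal (2 ^ (-e)) := by
        rw [← ENNReal.tsum_mul_right]
        exact tsum_congr hsplit
    _ ≤ ENNReal.ofReal (C * (max (t - z) 0 + 1) ^ (Fintype.card κ - 1) * 2 ^ (-c * (t - z))) *
          ENNReal.ofReal (2 ^ (-e)) := by
        gcongr
        exact hC _
    _ = ENNReal.ofReal
          (C * (max (t - z) 0 + 1) ^ (Fintype.card κ - 1) * (2 ^ (-c * t) * 2 ^ (c * z - e))) := by
        rw [← ENNReal.ofReal_mul (by positivity), mul_assoc _ (2 ^ (-c * (t - z))), hexp]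
    _ ≤ _ := by
        rw [← mul_assoc]
        gcongr
        exact max_le (by linarith) ht

lemma exists_tsum_prod_tail_le {c : ℝ} (hc : 0 < c) {γ w : ι → ℝ} (hγ : ∀ j, 0 ≤ γ j)
    (hw : ∀ j, c * γ j < w j) :
    ∃ C : ℝ, ∀ t : ℝ, 0 ≤ t →
      ∑' x : (κ → ℕ) × (ι → ℕ),
          {x : (κ → ℕ) × (ι → ℕ) | t < ∑ i, (x.1 i : ℝ) + ∑ j, (x.2 j : ℝ) * γ j}.indicator
            (fun x => ENNReal.ofReal
              (2 ^ (-(c * ∑ i, (x.1 i : ℝ) + ∑ j, (x.2 j : ℝ) * w j)))) x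
        ≤ ENNReal.ofReal (C * (t + 1) ^ (Fintype.card κ - 1) * 2 ^ (-c * t)) := by
  obtain ⟨A, hA, hAt⟩ := exists_tsum_tail_add_le (κ := κ) hc
  set W : (ι → ℕ) → ℝ := fun v => 2 ^ (-∑ j, (v j : ℝ) * (w j - c * γ j))
  set B := ∑' v : ι → ℕ, ENNReal.ofReal (W v)
  have hB : B ≠ ⊤ := tsum_two_rpow_neg_sum_mul_ne_top fun j => sub_pos.2 (hw j)
  refine ⟨A * B.toReal, fun t ht => ?_⟩
  set P := A * (t + 1) ^ (Fintype.card κ - 1) * 2 ^ (-c * t)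
  have hfiber : ∀ v : ι → ℕ,
      ∑' u : κ → ℕ,
          {x : (κ → ℕ) × (ι → ℕ) | t < ∑ i, (x.1 i : ℝ) + ∑ j, (x.2 j : ℝ) * γ j}.indicator
            (fun x => ENNReal.ofReal
              (2 ^ (-(c * ∑ i, (x.1 i : ℝ) + ∑ j, (x.2 j : ℝ) * w j)))) (u, v)
        ≤ ENNReal.ofReal P * ENNReal.ofReal (W v) := fun v => by
    have hW : c * ∑ j, (v j : ℝ) * γ j - ∑ j, (v j : ℝ) * w j =
        -∑ j, (v j : ℝ) * (w j - c * γ j) := by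
      rw [mul_sum, ← sum_sub_distrib, ← sum_neg_distrib]
      exact sum_congr rfl fun j _ => by ring
    calc _ = ∑' u : κ → ℕ, {u : κ → ℕ | t < ∑ i, (u i : ℝ) + ∑ j, (v j : ℝ) * γ j}.indicator
            (fun u => ENNReal.ofReal
              (2 ^ (-(c * ∑ i, (u i : ℝ) + ∑ j, (v j : ℝ) * w j)))) u :=
          tsum_congr fun u => by simp only [Set.indicator_apply, Set.mem_ofPred_eq]
      _ ≤ _ := hAt t _ _ ht (sum_nonneg fun j _ => mul_nonneg (Nat.cast_nonneg _) (hγ j))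
      _ = _ := by rw [hW, ← ENNReal.ofReal_mul (by positivity)]
  calc _ = ∑' v : ι → ℕ, ∑' u : κ → ℕ, _ := by rw [ENNReal.tsum_prod', ENNReal.tsum_comm]
    _ ≤ ∑' v : ι → ℕ, ENNReal.ofReal P * ENNReal.ofReal (W v) := ENNReal.tsum_le_tsum hfiber
    _ = ENNReal.ofReal (A * B.toReal * (t + 1) ^ (Fintype.card κ - 1) * 2 ^ (-c * t)) := by
        rw [ENNReal.tsum_mul_left,
          show A * B.toReal * (t + 1) ^ (Fintype.card κ - 1) * 2 ^ (-c * t) = P * B.toReal by ring,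
          ENNReal.ofReal_mul' ENNReal.toReal_nonneg, ENNReal.ofReal_toReal hB]

lemma sum_mul_eq_mul_sum_subtype_add (p : ι → Prop) [DecidablePred p] {g : ι → ℝ} {g₀ : ℝ}
    (hg : ∀ j, p j → g j = g₀) (s : ι → ℕ) :
    ∑ j, (s j : ℝ) * g j =
      g₀ * ∑ i : {j // p j}, (s i : ℝ) + ∑ j : {j // ¬ p j}, (s j : ℝ) * g j := by
  rw [← Fintype.sum_subtype_add_sum_subtype p, mul_sum]
  exact congrArg (· + _) (sum_congr rfl fun i _ => by rw [hg i i.2, mul_comm])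

lemma exists_tsum_hyperbolic_cross_le (p : ι → Prop) [DecidablePred p] {c : ℝ} (hc : 0 < c)
    {γ w : ι → ℝ} (hγp : ∀ j, p j → γ j = 1) (hwp : ∀ j, p j → w j = c)
    (hγ : ∀ j, ¬ p j → 0 ≤ γ j) (hw : ∀ j, ¬ p j → c * γ j < w j) :
    ∃ C : ℝ, ∀ t : ℝ, 0 ≤ t →
      ∑' s : ι → ℕ, {s : ι → ℕ | t < ∑ j, (s j : ℝ) * γ j}.indicator
          (fun s => ENNReal.ofReal (2 ^ (-∑ j, (s j : ℝ) * w j))) s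
        ≤ ENNReal.ofReal (C * (t + 1) ^ (Fintype.card {j // p j} - 1) * 2 ^ (-c * t)) := by
  obtain ⟨C, hC⟩ := exists_tsum_prod_tail_le (κ := {j // p j}) (ι := {j // ¬ p j}) hc
    (γ := fun j => γ j) (w := fun j => w j) (fun j => hγ j j.2) (fun j => hw j j.2)
  refine ⟨C, fun t ht => le_trans (le_of_eq ?_) (hC t ht)⟩
  rw [← (Equiv.piEquivPiSubtypeProd p fun _ => ℕ).tsum_eq]
  refine tsum_congr fun s => ?_
  simp only [Set.indicator_apply, Set.mem_ofPred_eq, Equiv.piEquivPiSubtypeProd_apply,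
    sum_mul_eq_mul_sum_subtype_add p hγp, sum_mul_eq_mul_sum_subtype_add p hwp, one_mul]

end HyperbolicCross

lemma summable_and_tsum_le_of_tsum_ofReal_le {α : Type*} {f : α → ℝ} (hf : ∀ a, 0 ≤ f a)
    {B : ℝ} (hB : 0 ≤ B) (h : ∑' a, ENNReal.ofReal (f a) ≤ ENNReal.ofReal B) :
    Summable f ∧ ∑' a, f a ≤ B := by
  have hs : Summable f :=
    (ENNReal.summable_toReal (ne_top_of_le_ne_top ENNReal.ofReal_ne_top h)).congr
      fun a => ENNReal.toReal_ofReal (hf a)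
  refine ⟨hs, ?_⟩
  rwa [← ENNReal.ofReal_le_ofReal_iff hB, ENNReal.ofReal_tsum_of_nonneg hf hs]

lemma add_one_pow_le_two_pow_mul_rpow {m ν n : ℕ} (hmν : m ≤ ν) (hν : 1 ≤ ν) (hn : 1 ≤ n) :
    ((n : ℝ) + 1) ^ (m - 1) ≤ 2 ^ (ν - 1) * (n : ℝ) ^ ((ν : ℝ) - 1) := by
  have hn' : (1 : ℝ) ≤ n := by exact_mod_cast hn
  rw [show (ν : ℝ) - 1 = ((ν - 1 : ℕ) : ℝ) by rw [Nat.cast_sub hν, Nat.cast_one], rpow_natCast,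
    ← mul_pow]
  calc ((n : ℝ) + 1) ^ (m - 1) ≤ ((n : ℝ) + 1) ^ (ν - 1) :=
        pow_le_pow_right₀ (by linarith) (by omega)
    _ ≤ (2 * n) ^ (ν - 1) := by gcongr; linarith

lemma exists_summable_and_tsum_tail_le {d : ℕ} (ν : ℕ) (hν : 1 ≤ ν) (r : Fin d → ℝ) (r₁ : ℝ)
    (hr₁ : 1 < r₁) (hsmall : ∀ j : Fin d, (j : ℕ) < ν → r j = r₁)
    (hbig : ∀ j : Fin d, ν ≤ (j : ℕ) → r₁ < r j) {β : ℝ} (hβ : 0 < β) :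
    ∃ C : ℝ, 0 < C ∧ ∀ n : ℕ, 1 ≤ n →
      Summable (fun s : {s : Fin d → ℕ // (n : ℝ) < ∑ j, (s j : ℝ) * (r j / r₁)} =>
        ((2 : ℝ) ^ (-∑ j, (s.1 j : ℝ) * (r j - 1))) ^ β) ∧
      ∑' s : {s : Fin d → ℕ // (n : ℝ) < ∑ j, (s j : ℝ) * (r j / r₁)},
          ((2 : ℝ) ^ (-∑ j, (s.1 j : ℝ) * (r j - 1))) ^ β
        ≤ C * 2 ^ (-(β * (r₁ - 1)) * n) * (n : ℝ) ^ ((ν : ℝ) - 1) := by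
  set p : Fin d → Prop := fun j => (j : ℕ) < ν
  have hr₁0 : 0 < r₁ := by linarith
  obtain ⟨C, hC⟩ := exists_tsum_hyperbolic_cross_le p (c := β * (r₁ - 1))
    (γ := fun j => r j / r₁) (w := fun j => β * (r j - 1)) (mul_pos hβ (by linarith))
    (fun j hj => by simp [hsmall j hj, hr₁0.ne'])
    (fun j hj => by simp [hsmall j hj])
    (fun j hj => div_nonneg (by linarith [hbig j (not_lt.1 hj)]) hr₁0.le)
    (fun j hj => by
      have h1 : 1 < r j / r₁ := (one_lt_div hr₁0).2 (hbig j (not_lt.1 hj))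
      have h2 : (r₁ - 1) * (r j / r₁) = r j - r j / r₁ := by field_simp
      rw [mul_assoc, h2]
      exact mul_lt_mul_of_pos_left (by linarith) hβ)
  have hcard : Fintype.card {j // p j} ≤ ν := by
    simpa using Fintype.card_le_of_injective (fun j : {j // p j} => (⟨j.1.1, j.2⟩ : Fin ν))
      fun i j h => by simpa [Fin.ext_iff, Subtype.ext_iff] using h
  refine ⟨max C 1 * 2 ^ (ν - 1), by positivity, fun n hn => ?_⟩
  refine summable_and_tsum_le_of_tsum_ofReal_le (fun s => by positivity) (by positivity) ?_
  have hpow : ∀ s : Fin d → ℕ, ((2 : ℝ) ^ (-∑ j, (s j : ℝ) * (r j - 1))) ^ β =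
      2 ^ (-∑ j, (s j : ℝ) * (β * (r j - 1))) := fun s => by
    rw [← rpow_mul zero_le_two, neg_mul, sum_mul]
    exact congrArg (fun x : ℝ => (2 : ℝ) ^ (-x)) (sum_congr rfl fun j _ => by ring)
  calc _ = ∑' s : {s : Fin d → ℕ // (n : ℝ) < ∑ j, (s j : ℝ) * (r j / r₁)},
          ENNReal.ofReal (2 ^ (-∑ j, (s.1 j : ℝ) * (β * (r j - 1)))) := by simp_rw [hpow]
    _ = _ := tsum_subtype {s : Fin d → ℕ | (n : ℝ) < ∑ j, (s j : ℝ) * (r j / r₁)}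
          fun s => ENNReal.ofReal (2 ^ (-∑ j, (s j : ℝ) * (β * (r j - 1))))
    _ ≤ _ := hC n n.cast_nonneg
    _ ≤ _ := by
        refine ENNReal.ofReal_le_ofReal ?_
        calc C * ((n : ℝ) + 1) ^ (Fintype.card {j // p j} - 1) * 2 ^ (-(β * (r₁ - 1)) * n)
            ≤ max C 1 * (2 ^ (ν - 1) * (n : ℝ) ^ ((ν : ℝ) - 1)) * 2 ^ (-(β * (r₁ - 1)) * n) := by
              gcongr
              exacts [le_max_left C 1, add_one_pow_le_two_pow_mul_rpow hcard hν hn]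
          _ = _ := by ring

section Weighted

variable {ι : Type*} [Fintype ι] {r : ι → ℝ} {r₁ : ℝ}

lemma two_pow_sum_eq_mul (s : ι → ℕ) :
    (2 : ℝ) ^ (∑ j, s j) = 2 ^ (∑ j, (s j : ℝ) * r j) * 2 ^ (-∑ j, (s j : ℝ) * (r j - 1)) := by
  rw [← rpow_add two_pos, ← rpow_natCast, Nat.cast_sum, ← sum_neg_distrib, ← sum_add_distrib]
  exact congrArg _ (sum_congr rfl fun j _ => by ring)

lemma sub_one_mul_sum_div_le (hr₁ : 0 < r₁) (hr : ∀ j, r₁ ≤ r j) (s : ι → ℕ) :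
    (r₁ - 1) * ∑ j, (s j : ℝ) * (r j / r₁) ≤ ∑ j, (s j : ℝ) * (r j - 1) := by
  rw [mul_sum]
  refine sum_le_sum fun j _ => ?_
  have h1 : 1 ≤ r j / r₁ := (one_le_div hr₁).2 (hr j)
  have h2 : (r₁ - 1) * (r j / r₁) = r j - r j / r₁ := by field_simp
  nlinarith [(s j).cast_nonneg (α := ℝ)]

lemma tsum_tail_two_pow_mul_le (hr₁ : 1 < r₁) (hr : ∀ j, r₁ ≤ r j) {a : (ι → ℕ) → ℝ}
    (ha : ∀ s, 0 ≤ a s)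
    (hsum : Summable fun s : ι → ℕ => (2 : ℝ) ^ (∑ j, (s j : ℝ) * r j) * a s) (n : ℕ) :
    ∑' s : {s : ι → ℕ // (n : ℝ) < ∑ j, (s j : ℝ) * (r j / r₁)}, (2 : ℝ) ^ (∑ j, s.1 j) * a s.1 ≤
      2 ^ (-(n : ℝ) * (r₁ - 1)) * ∑' s : ι → ℕ, (2 : ℝ) ^ (∑ j, (s j : ℝ) * r j) * a s := by
  set A := {s : ι → ℕ | (n : ℝ) < ∑ j, (s j : ℝ) * (r j / r₁)}
  have hx0 : ∀ s, 0 ≤ (2 : ℝ) ^ (∑ j, (s j : ℝ) * r j) * a s :=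
    fun s => mul_nonneg (by positivity) (ha s)
  have hpt : ∀ s : A, (2 : ℝ) ^ (∑ j, s.1 j) * a s.1 ≤
      2 ^ (-(n : ℝ) * (r₁ - 1)) * ((2 : ℝ) ^ (∑ j, (s.1 j : ℝ) * r j) * a s.1) := by
    rintro ⟨s, hs⟩
    change (n : ℝ) < _ at hs
    have hkey : (n : ℝ) * (r₁ - 1) ≤ ∑ j, (s j : ℝ) * (r j - 1) := by
      nlinarith [sub_one_mul_sum_div_le (by linarith) hr s]
    rw [two_pow_sum_eq_mul (r := r), mul_left_comm, mul_assoc]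
    gcongr
    · exact ha s
    · norm_num
    · simpa using hkey
  have hsub := (hsum.subtype A).mul_left ((2 : ℝ) ^ (-(n : ℝ) * (r₁ - 1)))
  calc _ ≤ ∑' s : A, 2 ^ (-(n : ℝ) * (r₁ - 1)) * ((2 : ℝ) ^ (∑ j, (s.1 j : ℝ) * r j) * a s.1) :=
        (hsub.of_nonneg_of_le (fun s : A => mul_nonneg (by positivity) (ha s)) hpt).tsum_le_tsum
          hpt hsub
    _ ≤ _ := by
        rw [tsum_mul_left]
        exact mul_le_mul_of_nonneg_left (hsum.tsum_subtype_le _ _ hx0) (by positivity)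

lemma tsum_two_pow_mul_le_holder {θ β : ℝ} (hθβ : θ.HolderConjugate β) {a : (ι → ℕ) → ℝ}
    (ha : ∀ s, 0 ≤ a s)
    (hsum : Summable fun s : ι → ℕ => (2 : ℝ) ^ ((∑ j, (s j : ℝ) * r j) * θ) * a s ^ θ)
    (A : Set (ι → ℕ))
    (hA : Summable fun s : A => ((2 : ℝ) ^ (-∑ j, (s.1 j : ℝ) * (r j - 1))) ^ β) :
    ∑' s : A, (2 : ℝ) ^ (∑ j, s.1 j) * a s.1 ≤
      (∑' s : ι → ℕ, (2 : ℝ) ^ ((∑ j, (s j : ℝ) * r j) * θ) * a s ^ θ) ^ (1 / θ) *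
        (∑' s : A, ((2 : ℝ) ^ (-∑ j, (s.1 j : ℝ) * (r j - 1))) ^ β) ^ (1 / β) := by
  set x : (ι → ℕ) → ℝ := fun s => 2 ^ (∑ j, (s j : ℝ) * r j) * a s
  have hx0 : ∀ s, 0 ≤ x s := fun s => mul_nonneg (by positivity) (ha s)
  have hxθ : ∀ s, x s ^ θ = 2 ^ ((∑ j, (s j : ℝ) * r j) * θ) * a s ^ θ := fun s => by
    rw [mul_rpow (by positivity) (ha s), ← rpow_mul zero_le_two]
  calc ∑' s : A, (2 : ℝ) ^ (∑ j, s.1 j) * a s.1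
      = ∑' s : A, x s * 2 ^ (-∑ j, (s.1 j : ℝ) * (r j - 1)) :=
        tsum_congr fun s => by rw [two_pow_sum_eq_mul (r := r)]; ring
    _ ≤ (∑' s : A, x s ^ θ) ^ (1 / θ) *
          (∑' s : A, ((2 : ℝ) ^ (-∑ j, (s.1 j : ℝ) * (r j - 1))) ^ β) ^ (1 / β) :=
        inner_le_Lp_mul_Lq_tsum_of_nonneg hθβ (fun s => hx0 s) (fun s => by positivity)
          (by simp_rw [hxθ]; exact hsum.subtype A) hA
    _ ≤ _ := by
        gcongr
        · exact tsum_nonneg fun s => rpow_nonneg (hx0 s) θ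
        · exact one_div_nonneg.2 hθβ.nonneg
        · simp_rw [hxθ]
          exact hsum.tsum_subtype_le _ _ fun s => hxθ s ▸ rpow_nonneg (hx0 s) θ

end Weighted

theorem stmt_14_general (d ν : ℕ) (hν : 1 ≤ ν)
    (r : Fin d → ℝ) (r₁ : ℝ) (hr₁ : 1 < r₁)
    (hsmall : ∀ j : Fin d, (j : ℕ) < ν → r j = r₁)
    (hbig : ∀ j : Fin d, ν ≤ (j : ℕ) → r₁ < r j)
    (θ : ℝ) (hθ : 1 ≤ θ) :
    ∃ C : ℝ, 0 < C ∧ ∀ a : (Fin d → ℕ) → ℝ, (∀ s, 0 ≤ a s) →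
      (Summable fun s : Fin d → ℕ =>
        (2 : ℝ) ^ ((∑ j, (s j : ℝ) * r j) * θ) * a s ^ θ) →
      (∑' s : Fin d → ℕ,
        (2 : ℝ) ^ ((∑ j, (s j : ℝ) * r j) * θ) * a s ^ θ) ^ (1 / θ) ≤ 1 →
      ∀ n : ℕ, 1 ≤ n →
        (∑' s : {s : Fin d → ℕ // (n : ℝ) < ∑ j, (s j : ℝ) * (r j / r₁)},
          (2 : ℝ) ^ (∑ j, s.1 j) * a s.1) ≤
        C * (2 : ℝ) ^ (-(n : ℝ) * (r₁ - 1)) *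
          (n : ℝ) ^ (((ν : ℝ) - 1) * (1 - 1 / θ)) := by
  have hr : ∀ j, r₁ ≤ r j := fun j => by
    rcases lt_or_ge (j : ℕ) ν with h | h
    · exact (hsmall j h).ge
    · exact (hbig j h).le
  rcases hθ.eq_or_lt with rfl | hθ1
  · refine ⟨1, one_pos, fun a ha hsum hle n _ => ?_⟩
    simp only [mul_one, rpow_one, div_one, sub_self, mul_zero, rpow_zero, one_mul] at hsum hle ⊢
    exact (tsum_tail_two_pow_mul_le hr₁ hr ha hsum n).trans
      (mul_le_of_le_one_right (by positivity) hle)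
  have hconj := Real.HolderConjugate.conjExponent hθ1
  set β := θ.conjExponent
  obtain ⟨C, hC, htail⟩ :=
    exists_summable_and_tsum_tail_le ν hν r r₁ hr₁ hsmall hbig hconj.symm.pos
  refine ⟨C ^ (1 / β), by positivity, fun a ha hsum hle n hn => ?_⟩
  obtain ⟨hy, hyC⟩ := htail n hn
  have hβinv : 1 / β = 1 - 1 / θ := by
    rw [eq_sub_iff_add_eq', one_div, one_div, hconj.inv_add_inv_eq_one]
  calc _ ≤ _ := tsum_two_pow_mul_le_holder hconj ha hsum _ hy
    _ ≤ 1 * (C * 2 ^ (-(β * (r₁ - 1)) * n) * (n : ℝ) ^ ((ν : ℝ) - 1)) ^ (1 / β) := by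
        gcongr
        exacts [one_div_nonneg.2 hconj.symm.nonneg, hyC]
    _ = _ := by
        rw [one_mul, mul_rpow (by positivity) (by positivity),
          mul_rpow (by positivity) (by positivity), ← rpow_mul zero_le_two,
          ← rpow_mul n.cast_nonneg,
          show -(β * (r₁ - 1)) * n * (1 / β) = -n * (r₁ - 1) by field_simp [hconj.symm.ne_zero],
          hβinv]

theorem stmt_14 (d ν : ℕ) (hd : 1 ≤ d) (hν : 1 ≤ ν) (hνd : ν ≤ d)
    (r : Fin d → ℝ) (r₁ : ℝ) (hr₁ : 1 < r₁)
    (hsmall : ∀ j : Fin d, (j : ℕ) < ν → r j = r₁)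
    (hbig : ∀ j : Fin d, ν ≤ (j : ℕ) → r₁ < r j)
    (hmono : Monotone r)
    (θ : ℝ) (hθ : 1 ≤ θ) :
    ∃ C : ℝ, 0 < C ∧ ∀ a : (Fin d → ℕ) → ℝ, (∀ s, 0 ≤ a s) →
      (Summable fun s : Fin d → ℕ =>
        (2 : ℝ) ^ ((∑ j, (s j : ℝ) * r j) * θ) * a s ^ θ) →
      (∑' s : Fin d → ℕ,
        (2 : ℝ) ^ ((∑ j, (s j : ℝ) * r j) * θ) * a s ^ θ) ^ (1 / θ) ≤ 1 →
      ∀ n : ℕ, 1 ≤ n →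
        (∑' s : {s : Fin d → ℕ // (n : ℝ) < ∑ j, (s j : ℝ) * (r j / r₁)},
          (2 : ℝ) ^ (∑ j, s.1 j) * a s.1) ≤
        C * (2 : ℝ) ^ (-(n : ℝ) * (r₁ - 1)) *
          (n : ℝ) ^ (((ν : ℝ) - 1) * (1 - 1 / θ)) :=
  stmt_14_general d ν hν r r₁ hr₁ hsmall hbig θ hθ
end

section
/- Let d ≥ 1, 1 < q < ∞, r₁ > 1 − 1/q, and suppose nonnegative reals a_s (s ∈ ℤ₊^d) satisfy sup_{s≥0} 2^{(s,r)} a_s ≤ 1, where r has smallest coordinate r₁ with multiplicity ν and γ_j = r_j/r₁. Then (Σ_{(s,γ)>n} a_s^q · 2^{‖s‖₁(1−1/q)q})^{1/q} ≤ C·2^{−n(r₁−1+1/q)}·n^{(ν−1)/q} for a constant C independent of n and (a_s). -/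
open Finset

/-!
Since `a_s ≤ 2^{-(s,r)}`, each term is at most `2^{-c (s,γ)} ∏ⱼ z_j^{s_j}` with
`c = q (r₁ - 1 + 1/q)`, `γ_j = r_j / r₁` and `z_j = 2^{-(q-1)(γ_j - 1)}`; here `z_j = 1` for the
`ν` coordinates with `γ_j = 1` and `z_j < 1` for the others. Grouping multi-indices by
`k = ⌊(s,γ)⌋`, a level contributes at most `2^{-ck} (k+1)^{ν-1} ∏_{γ_j > 1} (1 - z_j)⁻¹`:
forgetting one coordinate with `γ_j = 1` is injective on a level, the other such coordinates are
at most `k`, and the remaining ones are summed as geometric series. Finally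
`∑_{k ≥ n} (k+1)^{ν-1} 2^{-ck} ≲ n^{ν-1} 2^{-cn}`.
-/

lemma sum_prod_le_prod_of_sum_le {ι κ : Type*} [Fintype ι] [DecidableEq ι] [DecidableEq κ]
    (f : ι → κ → ℝ) (hf : ∀ j x, 0 ≤ f j x) (A : ι → Set κ) (B : ι → ℝ)
    (hB : ∀ j (T : Finset κ), ↑T ⊆ A j → ∑ x ∈ T, f j x ≤ B j)
    (G : Finset (ι → κ)) (hG : ∀ v ∈ G, ∀ j, v j ∈ A j) :
    ∑ v ∈ G, ∏ j, f j (v j) ≤ ∏ j, B j := by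
  set T : ι → Finset κ := fun j => G.image (· j)
  calc ∑ v ∈ G, ∏ j, f j (v j) ≤ ∑ v ∈ Fintype.piFinset T, ∏ j, f j (v j) :=
        sum_le_sum_of_subset_of_nonneg
          (fun v hv => Fintype.mem_piFinset.2 fun j => mem_image_of_mem _ hv)
          (fun v _ _ => prod_nonneg fun j _ => hf j _)
    _ = ∏ j, ∑ x ∈ T j, f j x := (prod_univ_sum T f).symm
    _ ≤ ∏ j, B j := by
        refine prod_le_prod (fun j _ => sum_nonneg fun x _ => hf j x) fun j _ => hB j _ ?_
        intro x hx
        obtain ⟨v, hv, rfl⟩ := mem_image.1 (mem_coe.1 hx)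
        exact hG v hv j

lemma summable_add_one_pow_mul_geometric {w : ℝ} (hw : ‖w‖ < 1) (p : ℕ) :
    Summable fun i : ℕ => ((i : ℝ) + 1) ^ p * w ^ i := by
  have hexp : (fun i : ℕ => ((i : ℝ) + 1) ^ p * w ^ i) =
      fun i : ℕ => ∑ m ∈ range (p + 1), (p.choose m : ℝ) * ((i : ℝ) ^ m * w ^ i) := by
    ext i
    rw [add_pow, sum_mul]
    exact sum_congr rfl fun m _ => by ring
  rw [hexp]
  exact summable_sum fun m _ => (summable_pow_mul_geometric_of_norm_lt_one m hw).mul_left _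

lemma sum_add_one_pow_mul_geometric_le {w : ℝ} (hw0 : 0 ≤ w) (hw1 : w < 1) (p : ℕ) {n : ℕ}
    (hn : 1 ≤ n) (T : Finset ℕ) (hT : ∀ k ∈ T, n ≤ k) :
    ∑ k ∈ T, ((k : ℝ) + 1) ^ p * w ^ k ≤
      2 ^ p * (∑' i : ℕ, ((i : ℝ) + 1) ^ p * w ^ i) * n ^ p * w ^ n := by
  have hsum := summable_add_one_pow_mul_geometric (by rwa [Real.norm_of_nonneg hw0]) p
  have hterm : ∀ k ∈ T, ((k : ℝ) + 1) ^ p * w ^ k ≤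
      2 ^ p * n ^ p * w ^ n * ((((k - n : ℕ) : ℝ) + 1) ^ p * w ^ (k - n)) := by
    intro k hk
    obtain ⟨i, rfl⟩ := Nat.exists_eq_add_of_le (hT k hk)
    have hn' : (1 : ℝ) ≤ n := by exact_mod_cast hn
    have hbase : (((n + i : ℕ) : ℝ) + 1) ≤ 2 * n * ((i : ℝ) + 1) := by push_cast; nlinarith
    rw [Nat.add_sub_cancel_left, pow_add]
    calc (((n + i : ℕ) : ℝ) + 1) ^ p * (w ^ n * w ^ i)
        ≤ (2 * n * ((i : ℝ) + 1)) ^ p * (w ^ n * w ^ i) := by gcongr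
      _ = _ := by rw [mul_pow, mul_pow]; ring
  calc ∑ k ∈ T, ((k : ℝ) + 1) ^ p * w ^ k
      ≤ ∑ k ∈ T, 2 ^ p * n ^ p * w ^ n * ((((k - n : ℕ) : ℝ) + 1) ^ p * w ^ (k - n)) :=
        sum_le_sum hterm
    _ = 2 ^ p * n ^ p * w ^ n * ∑ i ∈ T.image (· - n), (((i : ℝ) + 1) ^ p * w ^ i) := by
        rw [← mul_sum, sum_image]
        intro k hk l hl h
        have := hT k hk; have := hT l hl; simp only at h; omega
    _ ≤ 2 ^ p * n ^ p * w ^ n * ∑' i : ℕ, ((i : ℝ) + 1) ^ p * w ^ i := by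
        gcongr
        exact hsum.sum_le_tsum _ fun i _ => by positivity
    _ = _ := by ring

section
variable {ι : Type*} [Fintype ι] [DecidableEq ι] {γ z : ι → ℝ} {S : Finset ι}

lemma sum_mul_eq_add_sum_update_zero {i₀ : ι} (hi₀ : γ i₀ = 1) (s : ι → ℕ) :
    ∑ j, (s j : ℝ) * γ j = s i₀ + ∑ j, (Function.update s i₀ 0 j : ℝ) * γ j := by
  rw [← add_sum_erase _ _ (mem_univ i₀), ← add_sum_erase _ _ (mem_univ i₀), hi₀]
  simp only [Function.update_self, Nat.cast_zero, zero_add, mul_one]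
  congr 1
  exact sum_congr rfl fun j hj => by rw [Function.update_of_ne (ne_of_mem_erase hj)]

lemma floor_sum_mul_eq_floor_update_zero_add {i₀ : ι} (hγ : ∀ j, 0 ≤ γ j) (hi₀ : γ i₀ = 1)
    (s : ι → ℕ) :
    ⌊∑ j, (s j : ℝ) * γ j⌋₊ = ⌊∑ j, (Function.update s i₀ 0 j : ℝ) * γ j⌋₊ + s i₀ := by
  rw [sum_mul_eq_add_sum_update_zero hi₀, add_comm,
    Nat.floor_add_natCast (sum_nonneg fun j _ => mul_nonneg (Nat.cast_nonneg _) (hγ j))]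

lemma injOn_update_zero_setOf_floor_eq {i₀ : ι} (hγ : ∀ j, 0 ≤ γ j) (hi₀ : γ i₀ = 1) (k : ℕ) :
    Set.InjOn (Function.update · i₀ 0) {s : ι → ℕ | ⌊∑ j, (s j : ℝ) * γ j⌋₊ = k} := by
  intro s₁ h₁ s₂ h₂ he
  have h₁' : _ = k := h₁
  have h₂' : _ = k := h₂
  rw [floor_sum_mul_eq_floor_update_zero_add hγ hi₀] at h₁' h₂'
  simp only at he
  have hi : s₁ i₀ = s₂ i₀ := by rw [he] at h₁'; omega
  rw [← Function.update_eq_self i₀ s₁, ← Function.update_idem, he, Function.update_idem, hi,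
    Function.update_eq_self]

lemma sum_prod_pow_le_of_floor_eq (hγ : ∀ j, 0 ≤ γ j) (hγS : ∀ j ∈ S, γ j = 1)
    (hS : S.Nonempty) (hz0 : ∀ j, 0 ≤ z j) (hzS : ∀ j ∈ S, z j ≤ 1) (hz1 : ∀ j ∉ S, z j < 1)
    (k : ℕ) (F : Finset (ι → ℕ)) (hF : ∀ s ∈ F, ⌊∑ j, (s j : ℝ) * γ j⌋₊ = k) :
    ∑ s ∈ F, ∏ j, z j ^ s j ≤ ((k : ℝ) + 1) ^ (#S - 1) * ∏ j ∈ Sᶜ, (1 - z j)⁻¹ := by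
  obtain ⟨i₀, hi₀⟩ := hS
  set e : (ι → ℕ) → ι → ℕ := (Function.update · i₀ 0)
  set m : ι → ℕ := Function.update (fun _ => k) i₀ 0
  have hle : ∀ s ∈ F, ∀ j ∈ S, s j ≤ k := by
    intro s hs j hj
    rw [← hF s hs]
    refine Nat.le_floor ?_
    simpa [hγS j hj] using single_le_sum (f := fun j => (s j : ℝ) * γ j)
      (fun j _ => mul_nonneg (Nat.cast_nonneg _) (hγ j)) (mem_univ j)
  calc ∑ s ∈ F, ∏ j, z j ^ s j ≤ ∑ s ∈ F, ∏ j, z j ^ e s j := by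
        refine sum_le_sum fun s _ => prod_le_prod (fun j _ => pow_nonneg (hz0 j) _) fun j _ => ?_
        rcases eq_or_ne j i₀ with rfl | hj
        · simpa [e] using pow_le_one₀ (hz0 j) (hzS j hi₀)
        · simp [e, Function.update_of_ne hj]
    _ = ∑ v ∈ F.image e, ∏ j, z j ^ v j :=
        (sum_image (f := fun v => ∏ j, z j ^ v j) (g := e) fun s₁ h₁ s₂ h₂ =>
          injOn_update_zero_setOf_floor_eq hγ (hγS i₀ hi₀) k (hF s₁ h₁) (hF s₂ h₂)).symm
    _ ≤ ∏ j, if j ∈ S then ((m j : ℝ) + 1) else (1 - z j)⁻¹ := by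
        refine sum_prod_le_prod_of_sum_le (fun j x => z j ^ x) (fun j x => pow_nonneg (hz0 j) x)
          (fun j => if j ∈ S then Set.Iic (m j) else Set.univ) _ ?_ _ ?_
        · intro j T hT
          split_ifs at hT ⊢ with hj
          · calc ∑ x ∈ T, z j ^ x ≤ ∑ x ∈ T, (1 : ℝ) :=
                  sum_le_sum fun x _ => pow_le_one₀ (hz0 j) (hzS j hj)
              _ ≤ ∑ x ∈ Iic (m j), (1 : ℝ) := sum_le_sum_of_subset_of_nonneg
                  (by intro x hx; simpa using hT hx) fun _ _ _ => zero_le_one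
              _ = (m j : ℝ) + 1 := by simp
          · rw [← tsum_geometric_of_lt_one (hz0 j) (hz1 j hj)]
            exact (summable_geometric_of_lt_one (hz0 j) (hz1 j hj)).sum_le_tsum _
              fun x _ => pow_nonneg (hz0 j) x
        · intro v hv j
          obtain ⟨s, hs, rfl⟩ := mem_image.1 hv
          split_ifs with hj
          · rcases eq_or_ne j i₀ with rfl | hji
            · simp [e, m]
            · simpa [e, m, Function.update_of_ne hji] using hle s hs j hj
          · trivial
    _ = ((k : ℝ) + 1) ^ (#S - 1) * ∏ j ∈ Sᶜ, (1 - z j)⁻¹ := by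
        rw [prod_ite, filter_mem_eq_inter, univ_inter, ← mul_prod_erase S _ hi₀,
          prod_congr rfl fun j hj => show (m j : ℝ) + 1 = k + 1 by
            simp [m, Function.update_of_ne (ne_of_mem_erase hj)],
          prod_const, card_erase_of_mem hi₀, filter_not, filter_mem_eq_inter, univ_inter,
          compl_eq_univ_sdiff]
        simp [m]

lemma sum_two_rpow_neg_mul_prod_pow_le (hγ : ∀ j, 0 ≤ γ j) (hγS : ∀ j ∈ S, γ j = 1)
    (hS : S.Nonempty) (hz0 : ∀ j, 0 ≤ z j) (hzS : ∀ j ∈ S, z j ≤ 1) (hz1 : ∀ j ∉ S, z j < 1)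
    {c : ℝ} (hc : 0 < c) :
    ∃ C, 0 < C ∧ ∀ n : ℕ, 1 ≤ n → ∀ F : Finset (ι → ℕ),
      (∀ s ∈ F, (n : ℝ) < ∑ j, (s j : ℝ) * γ j) →
      ∑ s ∈ F, (2 : ℝ) ^ (-(c * ∑ j, (s j : ℝ) * γ j)) * ∏ j, z j ^ s j ≤
        C * (2 : ℝ) ^ (-(c * n)) * n ^ (#S - 1) := by
  set p := #S - 1
  set w : ℝ := (2 : ℝ) ^ (-c)
  have hw0 : 0 < w := by positivity
  have hw1 : w < 1 := Real.rpow_lt_one_of_one_lt_of_neg one_lt_two (by linarith)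
  have hY : 0 < ∏ j ∈ Sᶜ, (1 - z j)⁻¹ :=
    prod_pos fun j hj => inv_pos.2 (sub_pos.2 (hz1 j (mem_compl.1 hj)))
  have hK : 0 < ∑' i : ℕ, ((i : ℝ) + 1) ^ p * w ^ i := by
    exact lt_of_lt_of_le (by simp) ((summable_add_one_pow_mul_geometric
      (by rwa [Real.norm_of_nonneg hw0.le]) p).le_tsum 0 fun i _ => by positivity)
  refine ⟨2 ^ p * (∑' i : ℕ, ((i : ℝ) + 1) ^ p * w ^ i) * ∏ j ∈ Sᶜ, (1 - z j)⁻¹,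
    by positivity, fun n hn F hF => ?_⟩
  set φ : (ι → ℕ) → ℕ := fun s => ⌊∑ j, (s j : ℝ) * γ j⌋₊
  have hwpow : ∀ x : ℝ, 0 ≤ x → (2 : ℝ) ^ (-(c * x)) ≤ w ^ ⌊x⌋₊ := by
    intro x hx
    rw [← Real.rpow_natCast, ← Real.rpow_mul zero_le_two]
    exact Real.rpow_le_rpow_of_exponent_le one_le_two (by nlinarith [Nat.floor_le hx])
  have hpow_n : w ^ n = (2 : ℝ) ^ (-(c * n)) := by
    rw [← Real.rpow_natCast, ← Real.rpow_mul zero_le_two, neg_mul]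
  calc ∑ s ∈ F, (2 : ℝ) ^ (-(c * ∑ j, (s j : ℝ) * γ j)) * ∏ j, z j ^ s j
      ≤ ∑ s ∈ F, w ^ φ s * ∏ j, z j ^ s j :=
        sum_le_sum fun s _ => mul_le_mul_of_nonneg_right
          (hwpow _ (sum_nonneg fun j _ => mul_nonneg (Nat.cast_nonneg _) (hγ j)))
          (prod_nonneg fun j _ => pow_nonneg (hz0 j) _)
    _ = ∑ k ∈ F.image φ, w ^ k * ∑ s ∈ F with φ s = k, ∏ j, z j ^ s j := by
        rw [← sum_fiberwise_of_maps_to fun s hs => mem_image_of_mem φ hs]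
        refine sum_congr rfl fun k _ => ?_
        rw [mul_sum]
        exact sum_congr rfl fun s hs => by rw [(mem_filter.1 hs).2]
    _ ≤ ∑ k ∈ F.image φ, w ^ k * (((k : ℝ) + 1) ^ p * ∏ j ∈ Sᶜ, (1 - z j)⁻¹) := by
        gcongr with k
        exact sum_prod_pow_le_of_floor_eq hγ hγS hS hz0 hzS hz1 k _
          fun s hs => (mem_filter.1 hs).2
    _ = (∑ k ∈ F.image φ, ((k : ℝ) + 1) ^ p * w ^ k) * ∏ j ∈ Sᶜ, (1 - z j)⁻¹ := by
        rw [sum_mul]; exact sum_congr rfl fun k _ => by ring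
    _ ≤ (2 ^ p * (∑' i : ℕ, ((i : ℝ) + 1) ^ p * w ^ i) * n ^ p * w ^ n) *
          ∏ j ∈ Sᶜ, (1 - z j)⁻¹ := by
        gcongr
        refine sum_add_one_pow_mul_geometric_le hw0.le hw1 p hn _ fun k hk => ?_
        obtain ⟨s, hs, rfl⟩ := mem_image.1 hk
        exact Nat.le_floor (hF s hs).le
    _ = _ := by rw [hpow_n]; ring

end

lemma rpow_mul_two_rpow_le_of_two_rpow_mul_le_one {ι : Type*} [Fintype ι] {q r₁ a : ℝ}
    {r : ι → ℝ} (hq : 0 < q) (hr₁ : r₁ ≠ 0) (ha : 0 ≤ a) (s : ι → ℕ)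
    (has : (2 : ℝ) ^ (∑ j, (s j : ℝ) * r j) * a ≤ 1) :
    a ^ q * (2 : ℝ) ^ ((∑ j, (s j : ℝ)) * (1 - 1 / q) * q) ≤
      (2 : ℝ) ^ (-(q * (r₁ - 1 + 1 / q) * ∑ j, (s j : ℝ) * (r j / r₁))) *
        ∏ j, ((2 : ℝ) ^ (-((q - 1) * (r j / r₁ - 1)))) ^ s j := by
  have ha' : a ≤ (2 : ℝ) ^ (-∑ j, (s j : ℝ) * r j) := by
    rw [Real.rpow_neg zero_le_two, ← one_div, le_div_iff₀ (by positivity), mul_comm]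
    exact has
  have hexp : -(∑ j, (s j : ℝ) * r j) * q + (∑ j, (s j : ℝ)) * (1 - 1 / q) * q =
      -(q * (r₁ - 1 + 1 / q) * ∑ j, (s j : ℝ) * (r j / r₁)) +
        ∑ j, -((q - 1) * (r j / r₁ - 1)) * s j := by
    simp only [neg_mul, sum_mul, mul_sum, ← sum_neg_distrib, ← sum_add_distrib]
    refine sum_congr rfl fun j _ => ?_
    field_simp
    ring
  calc a ^ q * (2 : ℝ) ^ ((∑ j, (s j : ℝ)) * (1 - 1 / q) * q)
      ≤ (2 : ℝ) ^ (-(∑ j, (s j : ℝ) * r j) * q) *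
          (2 : ℝ) ^ ((∑ j, (s j : ℝ)) * (1 - 1 / q) * q) := by
        gcongr
        rw [Real.rpow_mul zero_le_two]
        exact Real.rpow_le_rpow ha ha' hq.le
    _ = _ := by
        rw [← Real.rpow_add two_pos, hexp, Real.rpow_add two_pos, Real.rpow_sum_of_pos two_pos]
        simp only [Real.rpow_mul zero_le_two, Real.rpow_natCast]

lemma exists_sum_rpow_mul_two_rpow_le {d ν : ℕ} (hν : 1 ≤ ν) (hνd : ν ≤ d) {q : ℝ} (hq1 : 1 < q)
    {r : Fin d → ℝ} {r₁ : ℝ} (hr₁ : 1 - 1 / q < r₁)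
    (hsmall : ∀ j : Fin d, (j : ℕ) < ν → r j = r₁)
    (hbig : ∀ j : Fin d, ν ≤ (j : ℕ) → r₁ < r j) :
    ∃ C : ℝ, 0 < C ∧ ∀ a : (Fin d → ℕ) → ℝ, (∀ s, 0 ≤ a s) →
      (∀ s : Fin d → ℕ, (2 : ℝ) ^ (∑ j, (s j : ℝ) * r j) * a s ≤ 1) →
      ∀ n : ℕ, 1 ≤ n → ∀ F : Finset (Fin d → ℕ),
        (∀ s ∈ F, (n : ℝ) < ∑ j, (s j : ℝ) * (r j / r₁)) →
        ∑ s ∈ F, a s ^ q * (2 : ℝ) ^ ((∑ j, (s j : ℝ)) * (1 - 1 / q) * q) ≤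
          C * (2 : ℝ) ^ (-(q * (r₁ - 1 + 1 / q) * n)) * n ^ (ν - 1) := by
  have hq0 : 0 < q := by linarith
  have hr₁0 : 0 < r₁ := lt_of_le_of_lt (by rw [sub_nonneg, div_le_one hq0]; exact hq1.le) hr₁
  set S : Finset (Fin d) := {j | (j : ℕ) < ν}
  have hγS : ∀ j ∈ S, r j / r₁ = 1 := fun j hj => by
    rw [hsmall j (mem_filter.1 hj).2, div_self hr₁0.ne']
  have hγ : ∀ j ∉ S, 1 < r j / r₁ := fun j hj => by
    rw [one_lt_div hr₁0]; exact hbig j (by simpa [S] using hj)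
  obtain ⟨C, hC, hcount⟩ := sum_two_rpow_neg_mul_prod_pow_le (S := S) (γ := fun j => r j / r₁)
    (z := fun j => (2 : ℝ) ^ (-((q - 1) * (r j / r₁ - 1))))
    (fun j => if hj : j ∈ S then (hγS j hj).ge.trans' zero_le_one
      else (hγ j hj).le.trans' zero_le_one)
    hγS ⟨⟨0, by omega⟩, by simp [S]; omega⟩ (fun j => by positivity)
    (fun j hj => by simp [hγS j hj])
    (fun j hj => Real.rpow_lt_one_of_one_lt_of_neg one_lt_two (by nlinarith [hγ j hj]))
    (mul_pos hq0 (by linarith : 0 < r₁ - 1 + 1 / q))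
  rw [show #S = ν by simp [S, Fin.card_filter_val_lt, hνd]] at hcount
  refine ⟨C, hC, fun a ha has n hn F hF => (sum_le_sum fun s _ => ?_).trans (hcount n hn F hF)⟩
  exact rpow_mul_two_rpow_le_of_two_rpow_mul_le_one hq0 hr₁0.ne' (ha s) s (has s)

theorem stmt_15_general (d ν : ℕ) (hν : 1 ≤ ν) (hνd : ν ≤ d)
    (q : ℝ) (hq1 : 1 < q)
    (r : Fin d → ℝ) (r₁ : ℝ) (hr₁ : 1 - 1 / q < r₁)
    (hsmall : ∀ j : Fin d, (j : ℕ) < ν → r j = r₁)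
    (hbig : ∀ j : Fin d, ν ≤ (j : ℕ) → r₁ < r j) :
    ∃ C : ℝ, 0 < C ∧ ∀ a : (Fin d → ℕ) → ℝ, (∀ s, 0 ≤ a s) →
      (∀ s : Fin d → ℕ, (2 : ℝ) ^ (∑ j, (s j : ℝ) * r j) * a s ≤ 1) →
      ∀ n : ℕ, 1 ≤ n →
        (∑' s : {s : Fin d → ℕ // (n : ℝ) < ∑ j, (s j : ℝ) * (r j / r₁)},
          a s.1 ^ q * (2 : ℝ) ^ ((∑ j, (s.1 j : ℝ)) * (1 - 1 / q) * q)) ^ (1 / q) ≤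
        C * (2 : ℝ) ^ (-(n : ℝ) * (r₁ - 1 + 1 / q)) *
          (n : ℝ) ^ (((ν : ℝ) - 1) / q) := by
  obtain ⟨C, hC, hfinite⟩ := exists_sum_rpow_mul_two_rpow_le hν hνd hq1 hr₁ hsmall hbig
  refine ⟨C ^ (1 / q), by positivity, fun a ha has n hn => ?_⟩
  have hterm : ∀ s, 0 ≤ a s ^ q * (2 : ℝ) ^ ((∑ j, (s j : ℝ)) * (1 - 1 / q) * q) :=
    fun s => mul_nonneg (Real.rpow_nonneg (ha s) q) (by positivity)
  have hsum : ∑' s : {s : Fin d → ℕ // (n : ℝ) < ∑ j, (s j : ℝ) * (r j / r₁)},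
      a s.1 ^ q * (2 : ℝ) ^ ((∑ j, (s.1 j : ℝ)) * (1 - 1 / q) * q) ≤
      C * (2 : ℝ) ^ (-(q * (r₁ - 1 + 1 / q) * n)) * n ^ (ν - 1) := by
    refine tsum_le_of_sum_le' (by positivity) fun u => ?_
    refine Eq.trans_le (sum_map u (Function.Embedding.subtype _)
      fun s => a s ^ q * (2 : ℝ) ^ ((∑ j, (s j : ℝ)) * (1 - 1 / q) * q)).symm
      (hfinite a ha has n hn _ fun s hs => ?_)
    obtain ⟨s, -, rfl⟩ := mem_map.1 hs
    exact s.2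
  refine (Real.rpow_le_rpow (tsum_nonneg fun s : {s // _} => hterm s.1) hsum
    (by positivity)).trans_eq ?_
  rw [Real.mul_rpow (by positivity) (by positivity), Real.mul_rpow hC.le (by positivity),
    ← Real.rpow_mul zero_le_two, ← Real.rpow_natCast, ← Real.rpow_mul (Nat.cast_nonneg n),
    Nat.cast_sub hν, Nat.cast_one, mul_one_div, mul_one_div]
  congr 3
  field_simp [(by linarith : q ≠ 0)]

theorem stmt_15 (d ν : ℕ) (hd : 1 ≤ d) (hν : 1 ≤ ν) (hνd : ν ≤ d)
    (q : ℝ) (hq1 : 1 < q)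
    (r : Fin d → ℝ) (r₁ : ℝ) (hr₁ : 1 - 1 / q < r₁)
    (hsmall : ∀ j : Fin d, (j : ℕ) < ν → r j = r₁)
    (hbig : ∀ j : Fin d, ν ≤ (j : ℕ) → r₁ < r j)
    (hmono : Monotone r) :
    ∃ C : ℝ, 0 < C ∧ ∀ a : (Fin d → ℕ) → ℝ, (∀ s, 0 ≤ a s) →
      (∀ s : Fin d → ℕ, (2 : ℝ) ^ (∑ j, (s j : ℝ) * r j) * a s ≤ 1) →
      ∀ n : ℕ, 1 ≤ n →
        (∑' s : {s : Fin d → ℕ // (n : ℝ) < ∑ j, (s j : ℝ) * (r j / r₁)},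
          a s.1 ^ q * (2 : ℝ) ^ ((∑ j, (s.1 j : ℝ)) * (1 - 1 / q) * q)) ^ (1 / q) ≤
        C * (2 : ℝ) ^ (-(n : ℝ) * (r₁ - 1 + 1 / q)) *
          (n : ℝ) ^ (((ν : ℝ) - 1) / q) :=
  stmt_15_general d ν hν hνd q hq1 r r₁ hr₁ hsmall hbig
end
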